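/- For the matrix M = I_r [I_r, e/r] ∈ ℝ^{r×(r+1)} (W = I_r, with an extra column equal to the barycenter e/r) and noise level parameter ε, the Hottopixx LP min p^T diag(X) s.t. X ≥ 0, ‖M − MX‖_1 ≤ 2ε, tr(X) = r, X(i,j) ≤ X(i,i) ≤ 1, with p = [1,2,…,r,−1], extracts (via the r largest diagonal entries of an optimal solution) the last column of M instead of a column of W whenever ε > 1/(2(r+1)). -/

import Mathlib

/-- The matrix `M = I_r [I_r, e/r] ∈ ℝ^{r×(r+1)}` of Example 1. -/
noncomputable def Mex (r : ℕ) : Matrix (Fin r) (Fin (r + 1)) ℝ :=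
  Matrix.of fun i j =>
    if (j : ℕ) = (i : ℕ) then 1 else if (j : ℕ) = r then (r : ℝ)⁻¹ else 0

/-- Feasible set of the Hottopixx LP: `X ≥ 0`, `‖M − MX‖₁ ≤ 2ε`,
`tr(X) = r`, `X(i,j) ≤ X(i,i) ≤ 1`. -/
def FeasHott {r : ℕ} (ε : ℝ) (X : Matrix (Fin (r + 1)) (Fin (r + 1)) ℝ) : Prop :=
  (∀ i j, 0 ≤ X i j) ∧ (∀ i, X i i ≤ 1) ∧ (∀ i j, X i j ≤ X i i) ∧
    (∑ i, X i i = (r : ℝ)) ∧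
    ∀ j, ∑ i, |(Mex r - Mex r * X) i j| ≤ 2 * ε

lemma mex_castSucc {r : ℕ} (i : Fin r) (k : Fin r) :
    Mex r i k.castSucc = if k = i then 1 else 0 := by
  simp only [Mex, Matrix.of_apply, Fin.coe_castSucc]
  rcases eq_or_ne k i with h | h
  · subst h; simp
  · have h1 : (k : ℕ) ≠ (i : ℕ) := fun hc => h (Fin.ext hc)
    have h2 : (k : ℕ) ≠ r := Nat.ne_of_lt k.isLt
    simp [h1, h2, h]

lemma mex_last {r : ℕ} (i : Fin r) : Mex r i (Fin.last r) = (r : ℝ)⁻¹ := by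
  have : (r : ℕ) ≠ (i : ℕ) := (Nat.ne_of_lt i.isLt).symm
  simp [Mex, this]

lemma mex_mul_apply {r : ℕ} (X : Matrix (Fin (r+1)) (Fin (r+1)) ℝ)
    (i : Fin r) (j : Fin (r+1)) :
    (Mex r * X) i j = X i.castSucc j + (r : ℝ)⁻¹ * X (Fin.last r) j := by
  rw [Matrix.mul_apply, Fin.sum_univ_castSucc]
  congr 1
  · rw [Finset.sum_congr rfl (fun k _ => by rw [mex_castSucc])]
    simp [Finset.sum_ite_eq']
  · rw [mex_last]

lemma diag_lb {r : ℕ} (hr2 : 2 ≤ r) {ε : ℝ} {X : Matrix (Fin (r+1)) (Fin (r+1)) ℝ}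
    (h0 : ∀ i j, 0 ≤ X i j) (j : Fin r)
    (hn : ∑ i, |(Mex r - Mex r * X) i j.castSucc| ≤ 2 * ε) :
    1 - 2 * ε ≤ X j.castSucc j.castSucc := by
  set q : ℝ := (r : ℝ)⁻¹ * X (Fin.last r) j.castSucc with hq
  have hq0 : 0 ≤ q := mul_nonneg (by positivity) (h0 _ _)
  have hEntry : ∀ i : Fin r, (Mex r - Mex r * X) i j.castSucc
      = (if j = i then 1 else 0) - X i.castSucc j.castSucc - q := by
    intro i
    rw [Matrix.sub_apply, mex_mul_apply, mex_castSucc]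
    ring
  have hsplit : ∑ i, |(Mex r - Mex r * X) i j.castSucc|
      = |(Mex r - Mex r * X) j j.castSucc|
        + ∑ i ∈ Finset.univ.erase j, |(Mex r - Mex r * X) i j.castSucc| :=
    (Finset.add_sum_erase _ _ (Finset.mem_univ j)).symm
  have h1 : 1 - X j.castSucc j.castSucc - q ≤ |(Mex r - Mex r * X) j j.castSucc| := by
    rw [hEntry j, if_pos rfl]; exact le_abs_self _
  have h2 : ∀ i ∈ Finset.univ.erase j, q ≤ |(Mex r - Mex r * X) i j.castSucc| := by
    intro i hi
    have hij : j ≠ i := fun h => (Finset.mem_erase.mp hi).1 h.symm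
    rw [hEntry i, if_neg hij]
    calc q ≤ X i.castSucc j.castSucc + q := by linarith [h0 i.castSucc j.castSucc]
      _ = -(0 - X i.castSucc j.castSucc - q) := by ring
      _ ≤ |0 - X i.castSucc j.castSucc - q| := neg_le_abs _
  have h3 : ((r : ℝ) - 1) * q ≤ ∑ i ∈ Finset.univ.erase j, |(Mex r - Mex r * X) i j.castSucc| := by
    have := Finset.sum_le_sum h2
    rw [Finset.sum_const, Finset.card_erase_of_mem (Finset.mem_univ j),
      Finset.card_univ, Fintype.card_fin] at this
    have hcast : ((r - 1 : ℕ) : ℝ) = (r : ℝ) - 1 := by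
      rw [Nat.cast_sub (by omega)]; norm_num
    rw [← hcast]; simpa [nsmul_eq_mul] using this
  have hr2' : (2 : ℝ) ≤ (r : ℝ) := by exact_mod_cast hr2
  nlinarith [hsplit ▸ hn]

set_option maxHeartbeats 2000000 in
/-- Example 1, failure of Hottopixx: for `M = I_r [I_r, e/r]`
and `p = [1,2,…,r,−1]`, whenever `ε > 1/(2(r+1))`, any optimal solution of the
Hottopixx LP has its last diagonal entry strictly larger than some of the first
`r` diagonal entries, so the `r` largest diagonal entries select the last
column of `M` instead of a column of `W = I_r`. -/
theorem stmt11 {r : ℕ} (hr : 1 ≤ r) (ε : ℝ)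
    (hε : 1 / (2 * ((r : ℝ) + 1)) < ε)
    (Xs : Matrix (Fin (r + 1)) (Fin (r + 1)) ℝ)
    (hfeas : FeasHott ε Xs)
    (hopt : ∀ X, FeasHott ε X →
      ∑ i : Fin (r + 1), (if (i : ℕ) = r then (-1 : ℝ) else ((i : ℕ) : ℝ) + 1) * Xs i i ≤
        ∑ i : Fin (r + 1), (if (i : ℕ) = r then (-1 : ℝ) else ((i : ℕ) : ℝ) + 1) * X i i) :
    ∃ k : Fin r, Xs k.castSucc k.castSucc < Xs (Fin.last r) (Fin.last r) := by
  obtain ⟨h0, h1d, h2, htr, hn⟩ := hfeas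
  by_contra hcon
  push_neg at hcon
  set L := Fin.last r with hL
  set t := Xs L L with ht
  have hε0 : 0 < ε := lt_trans (by positivity) hε
  have hrR : (1:ℝ) ≤ (r:ℝ) := by exact_mod_cast hr
  have hεr : 1 < 2 * ε * ((r:ℝ)+1) := by
    rw [div_lt_iff₀ (by positivity)] at hε
    nlinarith
  have htr' : ∑ k : Fin r, Xs k.castSucc k.castSucc + t = r := by
    rw [Fin.sum_univ_castSucc] at htr
    exact htr
  have ht0 : 0 ≤ t := h0 L L
  have ht1 : t ≤ 1 := h1d L
  have hsum_lb : (r:ℝ) * t ≤ ∑ k : Fin r, Xs k.castSucc k.castSucc := by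
    calc (r:ℝ) * t = ∑ _k : Fin r, t := by
          rw [Finset.sum_const, Finset.card_univ, Fintype.card_fin, nsmul_eq_mul]
      _ ≤ _ := Finset.sum_le_sum fun k _ => hcon k
  have htlt : t < 1 := by nlinarith
  set m := max 0 (1 - 2*ε) with hm
  have hm0 : 0 ≤ m := le_max_left _ _
  have hm1 : 1 - 2*ε ≤ m := le_max_right _ _
  have hrm : m < (r:ℝ) * (1 - m) := by
    rcases le_or_gt (1 - 2*ε) 0 with h | h
    · have : m = 0 := max_eq_left h
      rw [this]; nlinarith
    · have : m = 1 - 2*ε := max_eq_right h.le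
      rw [this]; nlinarith
  have hjs : ∃ j : Fin r, m < Xs j.castSucc j.castSucc := by
    by_contra hall
    push_neg at hall
    have hsum_ub : ∑ k : Fin r, Xs k.castSucc k.castSucc ≤ (r:ℝ) * m := by
      calc ∑ k : Fin r, Xs k.castSucc k.castSucc ≤ ∑ _k : Fin r, m :=
            Finset.sum_le_sum fun k _ => hall k
        _ = (r:ℝ) * m := by
            rw [Finset.sum_const, Finset.card_univ, Fintype.card_fin, nsmul_eq_mul]
    have := hcon ⟨0, hr⟩
    have := hall ⟨0, hr⟩
    nlinarith
  obtain ⟨js, hjsgt⟩ := hjs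
  set ds := Xs js.castSucc js.castSucc with hds
  set δ := min (ds - m) (1 - t) with hδdef
  have hδ : 0 < δ := lt_min (by linarith) (by linarith)
  have hδ1 : δ ≤ ds - m := min_le_left _ _
  have hδ2 : δ ≤ 1 - t := min_le_right _ _
  set s := t + δ with hs
  have hs1 : s ≤ 1 := by simp only [hs]; linarith
  have hs0 : 0 ≤ s := by simp only [hs]; linarith
  set c := max 0 (1 - s - 2*ε) / r with hc
  have hr0 : (0:ℝ) < r := by linarith
  have hc0 : 0 ≤ c := by positivity
  have hcm : c ≤ m := by
    rcases le_or_gt (1 - s - 2*ε) 0 with h | h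
    · rw [hc, max_eq_left h]
      simpa using hm0
    · have hce : c = (1 - s - 2*ε)/r := by rw [hc, max_eq_right h.le]
      rw [hce, div_le_iff₀ hr0]
      nlinarith
  -- the modified diagonal function
  set yd : Fin (r+1) → ℝ := fun j =>
    if j = L then s else if j = js.castSucc then ds - δ else Xs j j with hyd
  have hcsL : ∀ k : Fin r, k.castSucc ≠ L := fun k => (Fin.castSucc_lt_last k).ne
  have hy : ∀ k : Fin r, m ≤ yd k.castSucc ∧ yd k.castSucc ≤ 1 := by
    intro k
    by_cases hk : k = js
    · have h1 : yd k.castSucc = ds - δ := by simp [hyd, hk, hcsL js]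
      rw [h1]
      exact ⟨by linarith, by linarith [h1d js.castSucc]⟩
    · have hne : k.castSucc ≠ js.castSucc := by
        simpa [Fin.castSucc_inj] using hk
      have : yd k.castSucc = Xs k.castSucc k.castSucc := by simp [hyd, hcsL k, hne]
      rw [this]
      have hr2 : 2 ≤ r := by
        have h1 : 1 < Fintype.card (Fin r) := Fintype.one_lt_card_iff_nontrivial.mpr ⟨⟨k, js, hk⟩⟩
        exact (by simpa using h1 : 1 < r)
      exact ⟨max_le (h0 _ _) (diag_lb hr2 h0 k (hn k.castSucc)), h1d _⟩
  have hydL : yd L = s := by simp [hyd]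
  have hyd0 : ∀ j, 0 ≤ yd j := by
    intro j
    rcases eq_or_ne j L with h | h
    · rw [h, hydL]; exact hs0
    · obtain ⟨k, rfl⟩ := Fin.exists_castSucc_eq.mpr h
      linarith [(hy k).1]
  have hyd1 : ∀ j, yd j ≤ 1 := by
    intro j
    rcases eq_or_ne j L with h | h
    · rw [h, hydL]; exact hs1
    · obtain ⟨k, rfl⟩ := Fin.exists_castSucc_eq.mpr h
      exact (hy k).2
  have hydm : ∀ j, j ≠ L → m ≤ yd j := by
    intro j h
    obtain ⟨k, rfl⟩ := Fin.exists_castSucc_eq.mpr h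
    exact (hy k).1
  -- the competitor matrix
  set Y : Matrix (Fin (r+1)) (Fin (r+1)) ℝ := fun k j =>
    if j = L then (if k = L then s else c) else (if k = j then yd j else 0) with hY
  have hYdiag : ∀ j, Y j j = yd j := by
    intro j
    rcases eq_or_ne j L with h | h
    · subst h; simp [hY, hydL]
    · simp [hY, h]
  have hydc : ∀ k : Fin r, yd k.castSucc
      = Xs k.castSucc k.castSucc - (if k = js then δ else 0) := by
    intro k
    by_cases hk : k = js
    · rw [if_pos hk]
      have h1 : yd k.castSucc = ds - δ := by simp [hyd, hk, hcsL js]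
      rw [h1, hds, hk]
    · have hne : k.castSucc ≠ js.castSucc := by simpa [Fin.castSucc_inj] using hk
      simp [hyd, hcsL k, hne, hk]
  set Y : Matrix (Fin (r+1)) (Fin (r+1)) ℝ := fun k j =>
    if j = L then (if k = L then s else c) else (if k = j then yd j else 0) with hY
  have hYdiag : ∀ j, Y j j = yd j := by
    intro j
    rcases eq_or_ne j L with h | h
    · subst h; simp [hY, hydL]
    · simp [hY, h]
  have hfeasY : FeasHott ε Y := by
    refine ⟨?_, ?_, ?_, ?_, ?_⟩
    · intro i j
      rcases eq_or_ne j L with h | h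
      · subst h
        simp only [hY, if_pos rfl]
        rcases eq_or_ne i L with h2 | h2 <;> simp [h2, hs0, hc0]
      · simp only [hY, if_neg h]
        rcases eq_or_ne i j with h2 | h2
        · simp [h2, hyd0 j]
        · simp [h2]
    · intro i; rw [hYdiag]; exact hyd1 i
    · intro i j
      rw [hYdiag]
      rcases eq_or_ne j L with h | h
      · subst h
        simp only [hY, if_pos rfl]
        rcases eq_or_ne i L with h2 | h2
        · rw [if_pos h2, h2, hydL]
        · rw [if_neg h2]
          exact le_trans hcm (hydm i h2)
      · simp only [hY, if_neg h]
        rcases eq_or_ne i j with h2 | h2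
        · rw [if_pos h2, h2]
        · rw [if_neg h2]; exact hyd0 i
    · have hsum1 : ∑ j, Y j j = ∑ j, yd j := Finset.sum_congr rfl fun j _ => hYdiag j
      rw [hsum1, Fin.sum_univ_castSucc, ← hL]
      have hsum2 : ∑ k : Fin r, yd k.castSucc
          = (∑ k : Fin r, Xs k.castSucc k.castSucc) - δ := by
        rw [Finset.sum_congr rfl fun k _ => hydc k, Finset.sum_sub_distrib]
        congr 1
        simp
      rw [hsum2, hydL, hs]
      linarith
    · intro j
      rcases eq_or_ne j L with h | h
      · subst h
        have hrc : (r:ℝ) * c = max 0 (1 - s - 2*ε) := by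
          rw [hc]; field_simp
        have hE : ∀ i : Fin r, (Mex r - Mex r * Y) i L
            = (r:ℝ)⁻¹ * (1 - max 0 (1 - s - 2*ε) - s) := by
          intro i
          rw [Matrix.sub_apply, mex_mul_apply, hL, mex_last]
          have e1 : Y i.castSucc (Fin.last r) = c := by
            rw [← hL]; simp [hY, hcsL i]
          have e2 : Y (Fin.last r) (Fin.last r) = s := by
            rw [← hL, hYdiag, hydL]
          rw [e1, e2, ← hrc]
          have hrne : (r:ℝ) ≠ 0 := ne_of_gt hr0
          field_simp
          ring
        rw [Finset.sum_congr rfl fun i _ => congrArg abs (hE i)]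
        rw [Finset.sum_const, Finset.card_univ, Fintype.card_fin, nsmul_eq_mul]
        rw [abs_mul, abs_inv, abs_of_nonneg hr0.le, ← mul_assoc,
          mul_inv_cancel₀ (ne_of_gt hr0), one_mul]
        rcases le_or_gt (1 - s - 2*ε) 0 with hcase | hcase
        · rw [max_eq_left hcase]
          exact abs_le.mpr ⟨by linarith, by linarith⟩
        · rw [max_eq_right hcase.le]
          exact abs_le.mpr ⟨by linarith, by linarith⟩
      · obtain ⟨k, rfl⟩ := Fin.exists_castSucc_eq.mpr h
        have hE : ∀ i : Fin r, (Mex r - Mex r * Y) i k.castSucc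
            = if k = i then 1 - yd k.castSucc else 0 := by
          intro i
          rw [Matrix.sub_apply, mex_mul_apply, mex_castSucc]
          have e2 : Y L k.castSucc = 0 := by
            simp [hY, hcsL k, (Ne.symm (hcsL k))]
          have e1 : Y i.castSucc k.castSucc = if k = i then yd k.castSucc else 0 := by
            simp only [hY, if_neg (hcsL k)]
            by_cases hik : i = k
            · simp [hik]
            · have hne2 : i.castSucc ≠ k.castSucc := by
                simpa [Fin.castSucc_inj] using hik
              simp [hne2, Ne.symm hik]
          rw [e1, e2]
          by_cases hki : k = i <;> simp [hki] <;> ring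
        rw [Finset.sum_congr rfl fun i _ => congrArg abs (hE i)]
        simp only [apply_ite abs, abs_zero]
        rw [Finset.sum_ite_eq, if_pos (Finset.mem_univ k)]
        exact abs_le.mpr ⟨by linarith [(hy k).2], by linarith [(hy k).1, hm1]⟩
  -- objective comparison
  have hobj : ∀ (Z : Matrix (Fin (r+1)) (Fin (r+1)) ℝ),
      ∑ i : Fin (r+1), (if (i:ℕ) = r then (-1:ℝ) else ((i:ℕ):ℝ)+1) * Z i i
      = (∑ k : Fin r, (((k:ℕ):ℝ)+1) * Z k.castSucc k.castSucc)
        + (-1) * Z (Fin.last r) (Fin.last r) := by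
    intro Z
    rw [Fin.sum_univ_castSucc]
    congr 1
    · refine Finset.sum_congr rfl fun k _ => ?_
      have : ((k.castSucc : Fin (r+1)) : ℕ) ≠ r := by
        rw [Fin.coe_castSucc]; exact Nat.ne_of_lt k.isLt
      rw [if_neg this, Fin.coe_castSucc]
    · rw [if_pos (Fin.val_last r)]
  have hle := hopt Y hfeasY
  rw [hobj, hobj] at hle
  have hYlast : Y (Fin.last r) (Fin.last r) = s := by
    rw [← hL, hYdiag, hydL]
  have hYsum : ∑ k : Fin r, (((k:ℕ):ℝ)+1) * Y k.castSucc k.castSucc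
      = (∑ k : Fin r, (((k:ℕ):ℝ)+1) * Xs k.castSucc k.castSucc)
        - (((js:ℕ):ℝ)+1) * δ := by
    have : ∀ k : Fin r, (((k:ℕ):ℝ)+1) * Y k.castSucc k.castSucc
        = (((k:ℕ):ℝ)+1) * Xs k.castSucc k.castSucc
          - (if k = js then (((k:ℕ):ℝ)+1) * δ else 0) := by
      intro k
      rw [hYdiag, hydc]
      by_cases hk : k = js <;> simp [hk] <;> ring
    rw [Finset.sum_congr rfl fun k _ => this k, Finset.sum_sub_distrib]
    congr 1
    simp
  rw [hYsum, hYlast, ← hL, ← ht, hs] at hle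
  have hjs0 : (0:ℝ) ≤ ((js:ℕ):ℝ) := Nat.cast_nonneg _
  nlinarith
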